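/- arXiv:1404.3675 — 4 statements merged into one kernel-verified Lean document; each statement's English description precedes it below -/
import Mathlib

section
/- Every 1-Helly composite class is simple: if T is a composite class (a union of intersections of atomic classes) satisfying the 1-Helly property, then T equals the intersection ⋂_{f ∈ F} T_f where F = {f : f preserves every relation R such that {R} ∈ T}. Consequently, a composite class is simple if and only if it is 1-Helly. -/
/-- A relation over ℕ: an arity together with a set of tuples. -/
def NRel : Type := Σ r : ℕ, Set (Fin r → ℕ)

/-- An operation on ℕ: an arity together with a finitary function. -/
def NOp : Type := Σ a : ℕ, (Fin a → ℕ) → ℕ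

/-- An operation preserves a relation (is a polymorphism of it). -/
def Preserves (g : NOp) (R : NRel) : Prop :=
  ∀ ts : Fin g.1 → (Fin R.1 → ℕ), (∀ i, ts i ∈ R.2) →
    (fun j => g.2 (fun i => ts i j)) ∈ R.2

/-- The atomic class induced by an operation. -/
def AtomicClass (g : NOp) : Set (Set NRel) := {Γ | ∀ R ∈ Γ, Preserves g R}

/-- A simple class: an intersection of atomic classes. -/
def SimpleClass (F : Set NOp) : Set (Set NRel) := ⋂ g ∈ F, AtomicClass g

def IsSimple (T : Set (Set NRel)) : Prop := ∃ F : Set NOp, T = SimpleClass F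

/-- A composite class: a union of simple classes. -/
def IsComposite (T : Set (Set NRel)) : Prop :=
  ∃ 𝒮 : Set (Set NOp), T = ⋃ F ∈ 𝒮, SimpleClass F

def OneHelly (T : Set (Set NRel)) : Prop :=
  ∀ Γ : Set NRel, (∀ R ∈ Γ, ({R} : Set NRel) ∈ T) → Γ ∈ T

/-! The language `Γ₀` of all relations `R` with `{R} ∈ T` lies in `T` by 1-Helly, hence in some
simple constituent `T_F` of `T`; so `F ⊆ Pol(Γ₀)` and `T_{Pol(Γ₀)} ⊆ T_F ⊆ T`. Conversely, since
composite classes are hereditary, every `Γ ∈ T` is a sublanguage of `Γ₀` and so lies in `T_{Pol(Γ₀)}`. -/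

theorem mem_simpleClass_iff {F : Set NOp} {Γ : Set NRel} :
    Γ ∈ SimpleClass F ↔ ∀ g ∈ F, ∀ R ∈ Γ, Preserves g R := by
  simp only [SimpleClass, AtomicClass, Set.mem_iInter, Set.mem_ofPred_eq]

theorem simpleClass_antitone : Antitone SimpleClass :=
  fun _ _ hFF' => Set.biInter_subset_biInter_left hFF'

theorem mem_simpleClass_of_subset {F : Set NOp} {Γ Γ' : Set NRel} (hΓ' : Γ' ⊆ Γ)
    (hΓ : Γ ∈ SimpleClass F) : Γ' ∈ SimpleClass F :=
  mem_simpleClass_iff.2 fun g hg R hR => mem_simpleClass_iff.1 hΓ g hg R (hΓ' hR)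

theorem mem_simpleClass_polymorphisms (Γ : Set NRel) :
    Γ ∈ SimpleClass {g | ∀ R ∈ Γ, Preserves g R} :=
  mem_simpleClass_iff.2 fun _ hg => hg

theorem oneHelly_simpleClass (F : Set NOp) : OneHelly (SimpleClass F) :=
  fun _ hΓ => mem_simpleClass_iff.2 fun g hg R hR =>
    mem_simpleClass_iff.1 (hΓ R hR) g hg R (Set.mem_singleton R)

namespace IsComposite

variable {T : Set (Set NRel)}

theorem mem_of_subset (hT : IsComposite T) {Γ Γ' : Set NRel} (hΓ' : Γ' ⊆ Γ) (hΓ : Γ ∈ T) :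
    Γ' ∈ T := by
  obtain ⟨𝒮, rfl⟩ := hT
  obtain ⟨F, hF, hΓF⟩ := Set.mem_iUnion₂.1 hΓ
  exact Set.mem_iUnion₂.2 ⟨F, hF, mem_simpleClass_of_subset hΓ' hΓF⟩

theorem eq_simpleClass_of_oneHelly (hT : IsComposite T) (hH : OneHelly T) :
    T = SimpleClass {g | ∀ R, ({R} : Set NRel) ∈ T → Preserves g R} := by
  set Γ₀ : Set NRel := {R | {R} ∈ T}
  have hΓ₀ : Γ₀ ∈ T := hH Γ₀ fun _ hR => hR
  obtain ⟨𝒮, rfl⟩ := id hT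
  obtain ⟨F, hF, hΓ₀F⟩ := Set.mem_iUnion₂.1 hΓ₀
  have hF_sub : F ⊆ {g | ∀ R ∈ Γ₀, Preserves g R} :=
    fun g hg => mem_simpleClass_iff.1 hΓ₀F g hg
  refine subset_antisymm (fun Γ hΓ => ?_) fun Γ hΓ => ?_
  · have hΓΓ₀ : Γ ⊆ Γ₀ := fun R hR => hT.mem_of_subset (Set.singleton_subset_iff.2 hR) hΓ
    exact mem_simpleClass_of_subset hΓΓ₀ (mem_simpleClass_polymorphisms Γ₀)
  · exact Set.mem_iUnion₂.2 ⟨F, hF, simpleClass_antitone hF_sub hΓ⟩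

end IsComposite

/-- A 1-Helly composite class T is simple: it equals the intersection of the
atomic classes T_f over all operations f preserving every relation R with
{R} ∈ T.  Consequently, a composite class is simple iff it is 1-Helly. -/
theorem composite_oneHelly_iff_simple (T : Set (Set NRel)) (hT : IsComposite T) :
    (OneHelly T →
      T = SimpleClass {g : NOp | ∀ R : NRel, ({R} : Set NRel) ∈ T → Preserves g R})
    ∧ (IsSimple T ↔ OneHelly T) := by
  refine ⟨hT.eq_simpleClass_of_oneHelly, ?_, fun hH => ⟨_, hT.eq_simpleClass_of_oneHelly hH⟩⟩
  rintro ⟨F, rfl⟩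
  exact oneHelly_simpleClass F
end

section
/- Let I be an index set and for each R in some universe of relations let S(R) ⊆ I be a finite set. Suppose Γ is a nonempty finite set of relations such that for every subset Γ' ⊆ Γ with |Γ'| ≤ h+1 we have |⋃_{R ∈ Γ'} S(R)| ≤ h, where h ≥ 1. Then |⋃_{R ∈ Γ} S(R)| ≤ h. -/
/-!
Take a subfamily `G ⊆ Γ` of minimal size with the same union as `Γ`. By minimality every member
of `G` owns a point covered by no other member, so every subfamily `G'` of `G` satisfies
`|G'| ≤ |⋃_{R ∈ G'} S R|`. If `|G| > h + 1`, a subfamily of size `h + 1` would then have a union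
of size at least `h + 1`; hence `|G| ≤ h + 1`, and the hypothesis bounds `|⋃_{R ∈ Γ} S R|`,
which equals `|⋃_{R ∈ G} S R|`.
-/

section

open Finset

variable {α I : Type*} [DecidableEq α] [DecidableEq I]

def IsIrredundant (S : α → Finset I) (G : Finset α) : Prop :=
  ∀ R ∈ G, ¬ S R ⊆ (G.erase R).biUnion S

namespace IsIrredundant

variable {S : α → Finset I} {G : Finset α}

theorem mono {G' : Finset α} (hG : IsIrredundant S G) (hG' : G' ⊆ G) :
    IsIrredundant S G' := fun R hR hcov =>
  hG R (hG' hR) (hcov.trans (biUnion_subset_biUnion_of_subset_left S (erase_subset_erase R hG')))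

theorem card_le_card_biUnion (hG : IsIrredundant S G) : #G ≤ #(G.biUnion S) := by
  refine card_le_card_of_forall_subsingleton (fun R x => x ∈ S R ∧ x ∉ (G.erase R).biUnion S)
    (fun R hR => ?_) (fun x _ => ?_)
  · obtain ⟨x, hxS, hxpriv⟩ := not_subset.mp (hG R hR)
    exact ⟨x, mem_biUnion.mpr ⟨R, hR, hxS⟩, hxS, hxpriv⟩
  · rintro R ⟨-, -, hxpriv⟩ R' ⟨hR', hxS', -⟩
    by_contra hne
    exact hxpriv (mem_biUnion.mpr ⟨R', mem_erase.mpr ⟨Ne.symm hne, hR'⟩, hxS'⟩)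

end IsIrredundant

theorem biUnion_erase_eq_of_subset {S : α → Finset I} {G : Finset α} {R : α}
    (hR : R ∈ G) (hcov : S R ⊆ (G.erase R).biUnion S) :
    (G.erase R).biUnion S = G.biUnion S := by
  conv_rhs => rw [← insert_erase hR, biUnion_insert]
  exact (union_eq_right.mpr hcov).symm

theorem exists_isIrredundant_subset_biUnion_eq (S : α → Finset I)
    (Γ : Finset α) : ∃ G ⊆ Γ, G.biUnion S = Γ.biUnion S ∧ IsIrredundant S G := by
  obtain ⟨G, hG, hmin⟩ := exists_min_image
    {G ∈ Γ.powerset | G.biUnion S = Γ.biUnion S} card ⟨Γ, by simp⟩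
  rw [mem_filter, mem_powerset] at hG
  refine ⟨G, hG.1, hG.2, fun R hR hcov => ?_⟩
  have hsmaller := hmin (G.erase R) (by
    rw [mem_filter, mem_powerset, biUnion_erase_eq_of_subset hR hcov]
    exact ⟨(erase_subset R G).trans hG.1, hG.2⟩)
  exact (card_erase_lt_of_mem hR).not_ge hsmaller

end

theorem union_bound_from_small_subsets_general
    {α I : Type*} [DecidableEq I] (S : α → Finset I) (h : ℕ)
    (Γ : Finset α)
    (hsub : ∀ Γ' ⊆ Γ, Γ'.card ≤ h + 1 → (Γ'.biUnion S).card ≤ h) :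
    (Γ.biUnion S).card ≤ h := by
  classical
  obtain ⟨G, hGΓ, hunion, hirr⟩ := exists_isIrredundant_subset_biUnion_eq S Γ
  rw [← hunion]
  refine hsub G hGΓ (not_lt.mp fun hlarge => ?_)
  obtain ⟨G', hG'G, hcard⟩ := Finset.exists_subset_card_eq hlarge.le
  have hlower := (hirr.mono hG'G).card_le_card_biUnion
  have hupper := hsub G' (hG'G.trans hGΓ) hcard.le
  omega

/-- Combinatorial core of the (h+1)-Helly result: if every subset `Γ'` of a
nonempty finite set `Γ` with `|Γ'| ≤ h + 1` satisfies
`|⋃_{R ∈ Γ'} S R| ≤ h`, then `|⋃_{R ∈ Γ} S R| ≤ h`. -/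
theorem union_bound_from_small_subsets
    {α I : Type*} [DecidableEq I] (S : α → Finset I) (h : ℕ) (hpos : 1 ≤ h)
    (Γ : Finset α) (hne : Γ.Nonempty)
    (hsub : ∀ Γ' ⊆ Γ, Γ'.card ≤ h + 1 → (Γ'.biUnion S).card ≤ h) :
    (Γ.biUnion S).card ≤ h :=
  union_bound_from_small_subsets_general S h Γ hsub
end

section
/- Any union of h simple classes is h-Helly: if T = T_1 ∪ ... ∪ T_h where each T_i is a 1-Helly hereditary class, and Γ is a language such that every sublanguage of Γ of size at most h is in T, then Γ ∈ T. -/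
/-!
If `Γ` lies in none of the classes `T i`, then by 1-Hellyness each `T i` rejects some singleton
`{R i}` with `R i ∈ Γ`. The set of these `h` witnesses is a sublanguage of `Γ` of size at most `h`,
and by heredity it lies in no `T i` either, since it contains the singleton `T i` rejects.
-/

open Set

theorem Set.encard_range_le_enatCard {α ι : Type*} (f : ι → α) :
    (range f).encard ≤ ENat.card ι := by
  rw [← image_univ, ← encard_univ]
  exact encard_image_le f univ

theorem range_notMem_iUnion_of_singleton_notMem {α ι : Type*} (T : ι → Set (Set α))
    (hHered : ∀ i, ∀ Γ Γ' : Set α, Γ ∈ T i → Γ' ⊆ Γ → Γ' ∈ T i)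
    (f : ι → α) (hf : ∀ i, ({f i} : Set α) ∉ T i) :
    range f ∉ ⋃ i, T i := by
  simp only [mem_iUnion, not_exists]
  exact fun i hi ↦ hf i (hHered i _ _ hi (singleton_subset_iff.2 (mem_range_self i)))

theorem exists_range_subset_notMem_iUnion {α ι : Type*} (T : ι → Set (Set α))
    (hHelly : ∀ i, ∀ Γ : Set α, (∀ R ∈ Γ, ({R} : Set α) ∈ T i) → Γ ∈ T i)
    (hHered : ∀ i, ∀ Γ Γ' : Set α, Γ ∈ T i → Γ' ⊆ Γ → Γ' ∈ T i)
    {Γ : Set α} (hΓ : Γ ∉ ⋃ i, T i) :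
    ∃ f : ι → α, range f ⊆ Γ ∧ range f ∉ ⋃ i, T i := by
  have hwitness : ∀ i, ∃ R ∈ Γ, ({R} : Set α) ∉ T i := fun i ↦ by
    by_contra! hall
    exact hΓ (mem_iUnion.2 ⟨i, hHelly i Γ hall⟩)
  choose f hfΓ hfT using hwitness
  exact ⟨f, range_subset_iff.2 hfΓ, range_notMem_iUnion_of_singleton_notMem T hHered f hfT⟩

theorem union_of_h_simple_is_h_Helly_general
    {α : Type*} (h : ℕ) (T : Fin h → Set (Set α))
    (hHelly : ∀ i, ∀ Γ : Set α, (∀ R ∈ Γ, ({R} : Set α) ∈ T i) → Γ ∈ T i)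
    (hHered : ∀ i, ∀ Γ Γ' : Set α, Γ ∈ T i → Γ' ⊆ Γ → Γ' ∈ T i)
    (Γ : Set α)
    (hsub : ∀ Γ' ⊆ Γ, Γ'.Finite → Γ'.encard ≤ h → Γ' ∈ ⋃ i, T i) :
    Γ ∈ ⋃ i, T i := by
  by_contra hΓ
  obtain ⟨f, hfΓ, hf⟩ := exists_range_subset_notMem_iUnion T hHelly hHered hΓ
  have hcard : (range f).encard ≤ h := by
    simpa using encard_range_le_enatCard f
  exact hf (hsub _ hfΓ (finite_range f) hcard)

/-- Any union of `h` simple (i.e. 1-Helly hereditary) classes is `h`-Helly: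
if every sublanguage of `Γ` of size at most `h` is in `T = ⋃ i, T i`,
then `Γ ∈ T`. -/
theorem union_of_h_simple_is_h_Helly
    {α : Type*} (h : ℕ) (hpos : 1 ≤ h) (T : Fin h → Set (Set α))
    (hHelly : ∀ i, ∀ Γ : Set α, (∀ R ∈ Γ, ({R} : Set α) ∈ T i) → Γ ∈ T i)
    (hHered : ∀ i, ∀ Γ Γ' : Set α, Γ ∈ T i → Γ' ⊆ Γ → Γ' ∈ T i)
    (Γ : Set α)
    (hsub : ∀ Γ' ⊆ Γ, Γ'.Finite → Γ'.encard ≤ h → Γ' ∈ ⋃ i, T i) :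
    Γ ∈ ⋃ i, T i :=
  union_of_h_simple_is_h_Helly_general h T hHelly hHered Γ hsub
end

section
/- Value-renamability construction for TSI: let Γ be a language over domain D with a totally symmetric idempotent polymorphism f₁ (viewed as a set function on nonempty subsets of D), let D₁ ⊆ D be a conservative subdomain (i.e., f₁(A) ∈ D₁ for every nonempty A ⊆ D₁), and let φ : D₁ → D₂ be a bijection with D₂ ∩ D = ∅. Define f on nonempty subsets of D ∪ D₂ by: f(A) = f₁(A) if A ⊆ D, f(A) = φ(f₁(φ⁻¹(A))) if A ⊆ D₂, and f(A) = max(A) otherwise. Then f is a totally symmetric idempotent operation that is a polymorphism of Γ ∪ {R_φ}, where R_φ = {(d, φ(d)) : d ∈ D₁}. -/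
/-- A set function `g` (a totally symmetric operation) preserves `R`. -/
def SetPreserves (g : Finset ℕ → ℕ) (R : NRel) : Prop :=
  ∀ (k : ℕ) (ts : Fin (k + 1) → (Fin R.1 → ℕ)), (∀ i, ts i ∈ R.2) →
    (fun j => g (Finset.univ.image fun i => ts i j)) ∈ R.2

/-- The graph of `φ` restricted to `D₁`, as a binary relation. -/
def graphRel (φ : ℕ → ℕ) (D₁ : Finset ℕ) : NRel :=
  ⟨2, {t | ∃ d ∈ D₁, t = ![d, φ d]}⟩

open Finset

theorem SetPreserves.of_eq_on {D : Finset ℕ} {g g' : Finset ℕ → ℕ} {R : NRel}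
    (h : SetPreserves g' R) (hR : ∀ t ∈ R.2, ∀ j, t j ∈ D) (hg : ∀ A ⊆ D, g A = g' A) :
    SetPreserves g R := by
  intro k ts hts
  convert h k ts hts using 2 with j
  exact hg _ (image_subset_iff.2 fun i _ => hR _ (hts i) j)

theorem setPreserves_graphRel {φ : ℕ → ℕ} {D₁ : Finset ℕ} {g : Finset ℕ → ℕ}
    (hmem : ∀ A : Finset ℕ, A.Nonempty → A ⊆ D₁ → g A ∈ D₁)
    (hcomm : ∀ A : Finset ℕ, A.Nonempty → A ⊆ D₁ → g (A.image φ) = φ (g A)) :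
    SetPreserves g (graphRel φ D₁) := by
  intro k ts hts
  have hpairs : ∀ i, ∃ d ∈ D₁, ts i = ![d, φ d] := hts
  choose d hd hts using hpairs
  have hA : (univ.image d).Nonempty := univ_nonempty.image d
  have hAD₁ : univ.image d ⊆ D₁ := image_subset_iff.2 fun i _ => hd i
  have hcol₀ : (univ.image fun i => ts i (0 : Fin 2)) = univ.image d := by simp [hts]
  have hcol₁ : (univ.image fun i => ts i (1 : Fin 2)) = (univ.image d).image φ := by
    simp [hts, image_image, Function.comp_def]
  refine ⟨g (univ.image d), hmem _ hA hAD₁, funext (Fin.forall_fin_two.2 ⟨?_, ?_⟩)⟩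
  · simp [hcol₀]
  · simp [hcol₁, hcomm _ hA hAD₁]

/-- Value-renamability construction for TSI: if `Γ` over `D` has the TSI
polymorphism `f₁` (a set function), `D₁ ⊆ D` is a conservative subdomain,
and `φ : D₁ → D₂` is a bijection onto a fresh domain `D₂` (with left inverse
`ψ` on `D₁`), then the set function `f` defined by `f₁` on subsets of `D`,
by `φ ∘ f₁ ∘ φ⁻¹` on subsets of `D₂`, and by max elsewhere, is a TSI
operation preserving `Γ ∪ {R_φ}`. -/
theorem TSI_value_renamable
    (D D₁ D₂ : Finset ℕ) (hD₁ : D₁ ⊆ D)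
    (φ ψ : ℕ → ℕ) (hφ : D₂ = D₁.image φ) (hdisj : Disjoint D₂ D)
    (hinv : ∀ x ∈ D₁, ψ (φ x) = x)
    (Γ : Set NRel) (hdom : ∀ R ∈ Γ, ∀ t ∈ R.2, ∀ j, t j ∈ D)
    (f₁ : Finset ℕ → ℕ)
    (hid₁ : ∀ x ∈ D, f₁ {x} = x)
    (hcons : ∀ A : Finset ℕ, A.Nonempty → A ⊆ D₁ → f₁ A ∈ D₁)
    (hpol : ∀ R ∈ Γ, SetPreserves f₁ R)
    (f : Finset ℕ → ℕ)
    (hf : ∀ A : Finset ℕ,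
      f A = if A ⊆ D then f₁ A
            else if A ⊆ D₂ then φ (f₁ (A.image ψ))
            else A.max.getD 0) :
    (∀ x ∈ D ∪ D₂, f {x} = x)
    ∧ (∀ R ∈ Γ, SetPreserves f R)
    ∧ SetPreserves f (graphRel φ D₁) := by
  have hf_D : ∀ A ⊆ D, f A = f₁ A := fun A hA => by rw [hf, if_pos hA]
  have hf_image : ∀ A : Finset ℕ, A.Nonempty → A ⊆ D₁ → f (A.image φ) = φ (f₁ A) := by
    intro A hA hAD₁
    have hD₂ : A.image φ ⊆ D₂ := hφ ▸ image_subset_image hAD₁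
    have hnotD : ¬ A.image φ ⊆ D := fun h => by
      obtain ⟨b, hb⟩ := hA.image φ
      exact disjoint_left.mp hdisj (hD₂ hb) (h hb)
    have hψ : (A.image φ).image ψ = A := by
      rw [image_image]
      exact (image_congr fun x hx => hinv x (hAD₁ hx)).trans image_id
    rw [hf, if_neg hnotD, if_pos hD₂, hψ]
  refine ⟨?_, fun R hR => (hpol R hR).of_eq_on (hdom R hR) hf_D, ?_⟩
  · intro x hx
    rcases mem_union.mp hx with hx | hx
    · rw [hf_D _ (singleton_subset_iff.2 hx), hid₁ x hx]
    · obtain ⟨d, hd, rfl⟩ := mem_image.mp (hφ ▸ hx)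
      have hsingle := hf_image {d} (singleton_nonempty d) (singleton_subset_iff.2 hd)
      rwa [image_singleton, hid₁ d (hD₁ hd)] at hsingle
  · refine setPreserves_graphRel (fun A hA hAD₁ => ?_) (fun A hA hAD₁ => ?_)
    · rw [hf_D A (hAD₁.trans hD₁)]
      exact hcons A hA hAD₁
    · rw [hf_image A hA hAD₁, hf_D A (hAD₁.trans hD₁)]
end
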